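/- arXiv:1811.08322 — 2 statements merged into one kernel-verified Lean document; each statement's English description precedes it below -/
import Mathlib

section
/- Let G be a strongly connected simple digraph on n vertices and 0 ≤ α < 1. Then min_i (α D_i + (1-α) T_i / D_i) ≤ μ_α(G) ≤ max_i (α D_i + (1-α) T_i / D_i), where T_i = ∑_t d_{it} D_t. -/
open Matrix BigOperators

/-- Spectral radius of a real square matrix: the largest modulus of its complex eigenvalues. -/
noncomputable def specRad {n : ℕ} (M : Matrix (Fin n) (Fin n) ℝ) : ℝ :=
  sSup {r : ℝ | ∃ μ ∈ spectrum ℂ (M.map (fun x => (x : ℂ))), r = ‖μ‖}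

/-- A matrix is irreducible iff its associated digraph is strongly connected. -/
def Irred {n : ℕ} (M : Matrix (Fin n) (Fin n) ℝ) : Prop :=
  ∀ i j : Fin n, Relation.ReflTransGen (fun a b => M a b ≠ 0) i j

/-- A directed walk of length `k` from `i` to `j` in a digraph. -/
def DWalk {n : ℕ} (G : Digraph (Fin n)) (i j : Fin n) (k : ℕ) : Prop :=
  ∃ f : ℕ → Fin n, f 0 = i ∧ f k = j ∧ ∀ l < k, G.Adj (f l) (f (l + 1))

/-- A digraph is strongly connected iff every vertex can reach every vertex. -/
def SConn {n : ℕ} (G : Digraph (Fin n)) : Prop :=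
  ∀ i j : Fin n, ∃ k : ℕ, DWalk G i j k

/-- A simple digraph has no loops. -/
def Loopless {n : ℕ} (G : Digraph (Fin n)) : Prop := ∀ i : Fin n, ¬ G.Adj i i

/-- Directed distance from `i` to `j`. -/
noncomputable def ddist {n : ℕ} (G : Digraph (Fin n)) (i j : Fin n) : ℕ :=
  sInf {k : ℕ | DWalk G i j k}

/-- Transmission of vertex `i`: sum of distances from `i` to all vertices. -/
noncomputable def transm {n : ℕ} (G : Digraph (Fin n)) (i : Fin n) : ℝ :=
  ∑ j : Fin n, (ddist G i j : ℝ)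

/-- The generalized distance matrix `D_α(G) = α·Diag(Tr) + (1-α)·D(G)`. -/
noncomputable def Dalpha {n : ℕ} (α : ℝ) (G : Digraph (Fin n)) : Matrix (Fin n) (Fin n) ℝ :=
  α • Matrix.diagonal (transm G) + (1 - α) • (Matrix.of fun i j => (ddist G i j : ℝ))

/-- The `D_α` spectral radius of a digraph. -/
noncomputable def mualpha {n : ℕ} (α : ℝ) (G : Digraph (Fin n)) : ℝ :=
  specRad (Dalpha α G)

/-- Isomorphism of digraphs on `Fin n`. -/
def IsoD {n : ℕ} (G H : Digraph (Fin n)) : Prop :=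
  ∃ e : Fin n ≃ Fin n, ∀ i j : Fin n, G.Adj i j ↔ H.Adj (e i) (e j)

/-- The digraph `K(n,k,m)`: vertices `0..k-1` form `K↔ₖ`, `k..k+m-1` form `K↔ₘ`,
`k+m..n-1` form `K↔_{n-k-m}`; all arcs present except those from `K↔_{n-k-m}` to `K↔ₘ`. -/
def KD (n k m : ℕ) : Digraph (Fin n) :=
  ⟨fun i j => i ≠ j ∧ ¬(k + m ≤ (i : ℕ) ∧ k ≤ (j : ℕ) ∧ (j : ℕ) < k + m)⟩

/-- A directed walk staying inside a vertex set `A`. -/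
def DWalkIn {n : ℕ} (G : Digraph (Fin n)) (A : Set (Fin n)) (i j : Fin n) (k : ℕ) : Prop :=
  ∃ f : ℕ → Fin n, f 0 = i ∧ f k = j ∧ (∀ l ≤ k, f l ∈ A) ∧ ∀ l < k, G.Adj (f l) (f (l + 1))

/-- The induced subdigraph on `A` is strongly connected. -/
def SCOn {n : ℕ} (G : Digraph (Fin n)) (A : Set (Fin n)) : Prop :=
  ∀ i ∈ A, ∀ j ∈ A, ∃ k : ℕ, DWalkIn G A i j k

/-! Write `Tr` for the transmission vector and `q i` for the quantity bounded in the theorem, so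
that `(D_α Tr)_i = q_i Tr_i`; since `Tr > 0` and `D_α ≥ 0` entrywise, these are Collatz–Wielandt
bounds. For an eigenvalue `μ` with eigenvector `v`, look at a coordinate `i` maximising
`|v_i| / Tr_i`: the triangle inequality in row `i` gives `|μ| ≤ q_i ≤ max q`. Conversely,
`c Tr ≤ D_α Tr` with `c = min q` iterates to `c^k Tr ≤ D_α^k Tr`, hence `c^k ≤ ‖D_α^k‖_∞`, and
Gelfand's formula turns this into `c ≤ ρ(D_α)`. -/

namespace Matrix

variable {ι : Type*} [Fintype ι] [DecidableEq ι]

theorem exists_mulVec_eq_smul_of_mem_spectrum {K : Type*} [Field K] {A : Matrix ι ι K} {μ : K}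
    (hμ : μ ∈ spectrum K A) : ∃ v : ι → K, v ≠ 0 ∧ A *ᵥ v = μ • v := by
  rw [← spectrum_toLin', ← Module.End.hasEigenvalue_iff_mem_spectrum] at hμ
  obtain ⟨v, hv⟩ := hμ.exists_hasEigenvector
  exact ⟨v, hv.2, by simpa [toLin'_apply] using Module.End.mem_eigenspace_iff.mp hv.1⟩

variable {M : Matrix ι ι ℝ} {x : ι → ℝ}

theorem norm_le_of_mem_spectrum_of_mulVec_le (hM : ∀ i j, 0 ≤ M i j) (hx : ∀ i, 0 < x i)
    {r : ℝ} (hr : ∀ i, (M *ᵥ x) i ≤ r * x i) {μ : ℂ}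
    (hμ : μ ∈ spectrum ℂ (M.map ((↑) : ℝ → ℂ))) : ‖μ‖ ≤ r := by
  obtain ⟨v, hv0, hv⟩ := exists_mulVec_eq_smul_of_mem_spectrum hμ
  obtain ⟨j₀, hj₀⟩ := Function.ne_iff.mp hv0
  obtain ⟨i, -, hi⟩ := Finset.exists_max_image Finset.univ (fun j => ‖v j‖ / x j)
    (Finset.univ_nonempty_iff.mpr ⟨j₀⟩)
  set s := ‖v i‖ / x i
  have hvj : ∀ j, ‖v j‖ ≤ s * x j := fun j =>
    (div_le_iff₀ (hx j)).mp (hi j (Finset.mem_univ j))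
  have hs : 0 < s :=
    (div_pos (norm_pos_iff.mpr hj₀) (hx j₀)).trans_le (hi j₀ (Finset.mem_univ j₀))
  have key : ‖μ‖ * ‖v i‖ ≤ r * ‖v i‖ := calc
    ‖μ‖ * ‖v i‖ = ‖∑ j, (M i j : ℂ) * v j‖ := by
      rw [← norm_mul, ← smul_eq_mul, ← Pi.smul_apply, ← hv]; rfl
    _ ≤ ∑ j, M i j * ‖v j‖ := (norm_sum_le _ _).trans_eq <| Finset.sum_congr rfl fun j _ => by
      rw [norm_mul, Complex.norm_real, Real.norm_of_nonneg (hM i j)]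
    _ ≤ ∑ j, M i j * (s * x j) := by gcongr with j; exacts [hM i j, hvj j]
    _ = s * (M *ᵥ x) i := by
      rw [mulVec, dotProduct, Finset.mul_sum]; exact Finset.sum_congr rfl fun j _ => by ring
    _ ≤ s * (r * x i) := by gcongr; exact hr i
    _ = r * ‖v i‖ := by simp only [s]; field_simp [(hx i).ne']
  exact le_of_mul_le_mul_right key ((div_pos_iff_of_pos_right (hx i)).mp hs)

theorem pow_mul_le_pow_mulVec (hM : ∀ i j, 0 ≤ M i j) {c : ℝ} (hc : 0 ≤ c)
    (h : ∀ i, c * x i ≤ (M *ᵥ x) i) (k : ℕ) (i : ι) : c ^ k * x i ≤ (M ^ k *ᵥ x) i := by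
  induction k generalizing i with
  | zero => simp
  | succ k ih => calc
    c ^ (k + 1) * x i = c ^ k * (c * x i) := by ring
    _ ≤ c ^ k * (M *ᵥ x) i := by gcongr; exact h i
    _ = ∑ j, M i j * (c ^ k * x j) := by
      rw [mulVec, dotProduct, Finset.mul_sum]; exact Finset.sum_congr rfl fun j _ => by ring
    _ ≤ ∑ j, M i j * (M ^ k *ᵥ x) j := by gcongr with j; exacts [hM i j, ih j]
    _ = (M ^ (k + 1) *ᵥ x) i := by rw [pow_succ', ← mulVec_mulVec]; rfl

end Matrix

theorem spectrum.ofReal_le_spectralRadius_of_pow_le_norm_pow {A : Type*} [NormedRing A]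
    [NormedAlgebra ℂ A] [CompleteSpace A] {a : A} {c : ℝ} (hc : 0 ≤ c)
    (h : ∀ k : ℕ, c ^ k ≤ ‖a ^ k‖) : ENNReal.ofReal c ≤ spectralRadius ℂ a :=
  ge_of_tendsto (spectrum.pow_norm_pow_one_div_tendsto_nhds_spectralRadius a) <|
    Filter.eventually_atTop.2 ⟨1, fun k hk => ENNReal.ofReal_le_ofReal <| calc
      c = (c ^ k) ^ ((k : ℝ)⁻¹) := (Real.pow_rpow_inv_natCast hc (by omega)).symm
      _ ≤ ‖a ^ k‖ ^ (1 / (k : ℝ)) := by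
        rw [one_div]; exact Real.rpow_le_rpow (by positivity) (h k) (by positivity)⟩

namespace Matrix

section LinftyOpNorm

attribute [local instance] Matrix.linftyOpNormedAddCommGroup Matrix.linftyOpNormedRing
  Matrix.linftyOpNormedAlgebra

theorem linfty_opNorm_map_ofReal {m n : Type*} [Fintype m] [Fintype n] (A : Matrix m n ℝ) :
    ‖A.map ((↑) : ℝ → ℂ)‖ = ‖A‖ := by
  simp [linfty_opNorm_def]

variable {ι : Type*} [Fintype ι] [DecidableEq ι] {M : Matrix ι ι ℝ} {x : ι → ℝ}

theorem pow_le_linfty_opNorm_pow (hM : ∀ i j, 0 ≤ M i j) (hx : ∀ i, 0 ≤ x i) (hx0 : x ≠ 0)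
    {c : ℝ} (hc : 0 ≤ c) (h : ∀ i, c * x i ≤ (M *ᵥ x) i) (k : ℕ) : c ^ k ≤ ‖M ^ k‖ := by
  have hnorm : ‖c ^ k • x‖ ≤ ‖M ^ k *ᵥ x‖ := (pi_norm_le_iff_of_nonneg (norm_nonneg _)).mpr
    fun i => calc
      ‖(c ^ k • x) i‖ = c ^ k * x i := by
        simp [Real.norm_of_nonneg (mul_nonneg (pow_nonneg hc k) (hx i))]
      _ ≤ (M ^ k *ᵥ x) i := pow_mul_le_pow_mulVec hM hc h k i
      _ ≤ ‖(M ^ k *ᵥ x) i‖ := Real.le_norm_self _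
      _ ≤ ‖M ^ k *ᵥ x‖ := norm_le_pi_norm _ i
  rw [norm_smul, Real.norm_of_nonneg (pow_nonneg hc k)] at hnorm
  exact le_of_mul_le_mul_right (hnorm.trans (linfty_opNorm_mulVec _ _)) (norm_pos_iff.mpr hx0)

theorem exists_mem_spectrum_le_norm_of_mul_le_mulVec (hM : ∀ i j, 0 ≤ M i j)
    (hx : ∀ i, 0 ≤ x i) (hx0 : x ≠ 0) {c : ℝ} (h : ∀ i, c * x i ≤ (M *ᵥ x) i) :
    ∃ μ ∈ spectrum ℂ (M.map ((↑) : ℝ → ℂ)), c ≤ ‖μ‖ := by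
  have : Nonempty ι := ⟨(Function.ne_iff.mp hx0).choose⟩
  obtain ⟨μ, hμ, hμρ⟩ := spectrum.exists_nnnorm_eq_spectralRadius (M.map ((↑) : ℝ → ℂ))
  refine ⟨μ, hμ, ?_⟩
  rcases lt_or_ge c 0 with hc | hc
  · exact hc.le.trans (norm_nonneg μ)
  have hpow : ∀ k : ℕ, c ^ k ≤ ‖M.map ((↑) : ℝ → ℂ) ^ k‖ := fun k => calc
    c ^ k ≤ ‖M ^ k‖ := pow_le_linfty_opNorm_pow hM hx hx0 hc h k
    _ = ‖(M ^ k).map ((↑) : ℝ → ℂ)‖ := (linfty_opNorm_map_ofReal _).symm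
    _ = ‖M.map ((↑) : ℝ → ℂ) ^ k‖ := congrArg norm (M.map_pow Complex.ofRealHom k)
  have hρ := spectrum.ofReal_le_spectralRadius_of_pow_le_norm_pow hc hpow
  rw [← hμρ] at hρ
  simpa using (ENNReal.ofReal_le_iff_le_toReal ENNReal.coe_ne_top).mp hρ

end LinftyOpNorm

end Matrix

attribute [local instance] Matrix.linftyOpNormedRing Matrix.linftyOpNormedAlgebra in
theorem isGreatest_specRad {n : ℕ} [Nonempty (Fin n)] (M : Matrix (Fin n) (Fin n) ℝ) :
    IsGreatest {r : ℝ | ∃ μ ∈ spectrum ℂ (M.map ((↑) : ℝ → ℂ)), r = ‖μ‖} (specRad M) := by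
  have hfin : {r : ℝ | ∃ μ ∈ spectrum ℂ (M.map ((↑) : ℝ → ℂ)), r = ‖μ‖}.Finite :=
    ((Matrix.finite_spectrum _).image norm).subset fun r ⟨μ, hμ, hr⟩ => ⟨μ, hμ, hr.symm⟩
  obtain ⟨μ, hμ⟩ := spectrum.nonempty (M.map ((↑) : ℝ → ℂ))
  exact ⟨Set.Nonempty.csSup_mem ⟨‖μ‖, μ, hμ, rfl⟩ hfin, fun r hr => le_csSup hfin.bddAbove hr⟩

section Digraph

variable {n : ℕ} {G : Digraph (Fin n)}

theorem one_le_ddist (hsc : SConn G) {i j : Fin n} (h : i ≠ j) : 1 ≤ ddist G i j := by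
  rw [Nat.one_le_iff_ne_zero]
  intro h0
  obtain ⟨f, hf0, hfk, -⟩ : DWalk G i j (ddist G i j) := Nat.sInf_mem (hsc i j)
  rw [h0] at hfk
  exact h (hf0 ▸ hfk)

theorem transm_nonneg (G : Digraph (Fin n)) (i : Fin n) : 0 ≤ transm G i :=
  Finset.sum_nonneg fun _ _ => Nat.cast_nonneg _

theorem transm_pos [Nontrivial (Fin n)] (hsc : SConn G) (i : Fin n) : 0 < transm G i := by
  obtain ⟨j, hj⟩ := exists_ne i
  calc (0 : ℝ) < 1 := one_pos
    _ ≤ ddist G i j := mod_cast one_le_ddist hsc hj.symm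
    _ ≤ transm G i := Finset.single_le_sum (f := fun t => (ddist G i t : ℝ))
        (fun _ _ => Nat.cast_nonneg _) (Finset.mem_univ j)

theorem Dalpha_nonneg (G : Digraph (Fin n)) {α : ℝ} (h0 : 0 ≤ α) (h1 : α ≤ 1) (i j : Fin n) :
    0 ≤ Dalpha α G i j := by
  simp only [Dalpha, Matrix.add_apply, Matrix.smul_apply, Matrix.diagonal_apply, Matrix.of_apply,
    smul_eq_mul]
  refine add_nonneg (mul_nonneg h0 ?_) (mul_nonneg (sub_nonneg.mpr h1) (Nat.cast_nonneg _))
  split_ifs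
  exacts [transm_nonneg G i, le_rfl]

theorem Dalpha_mulVec_transm (α : ℝ) {i : Fin n} (h : transm G i ≠ 0) :
    (Dalpha α G *ᵥ transm G) i = (α * transm G i +
      (1 - α) * (∑ t : Fin n, (ddist G i t : ℝ) * transm G t) / transm G i) * transm G i := by
  rw [Dalpha, Matrix.add_mulVec, Matrix.smul_mulVec, Matrix.smul_mulVec]
  simp only [Pi.add_apply, Pi.smul_apply, smul_eq_mul, Matrix.mulVec_diagonal]
  simp only [Matrix.mulVec, dotProduct, Matrix.of_apply]
  field_simp

end Digraph

theorem stmt3_general {n : ℕ} (hn : 2 ≤ n) (G : Digraph (Fin n)) (hsc : SConn G)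
    (α : ℝ) (h0 : 0 ≤ α) (h1 : α < 1) :
    (⨅ i : Fin n, (α * transm G i +
        (1 - α) * (∑ t : Fin n, (ddist G i t : ℝ) * transm G t) / transm G i)) ≤ mualpha α G ∧
    mualpha α G ≤ (⨆ i : Fin n, (α * transm G i +
        (1 - α) * (∑ t : Fin n, (ddist G i t : ℝ) * transm G t) / transm G i)) := by
  have : Nontrivial (Fin n) := Fin.nontrivial_iff_two_le.mpr hn
  set q : Fin n → ℝ := fun i => α * transm G i +
    (1 - α) * (∑ t : Fin n, (ddist G i t : ℝ) * transm G t) / transm G i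
  have hx : ∀ i, 0 < transm G i := transm_pos hsc
  have hx0 : transm G ≠ 0 := Function.ne_iff.mpr ⟨_, (hx (Classical.arbitrary _)).ne'⟩
  have hM := Dalpha_nonneg G h0 h1.le
  have hMx : ∀ i, (Dalpha α G *ᵥ transm G) i = q i * transm G i :=
    fun i => Dalpha_mulVec_transm α (hx i).ne'
  obtain ⟨⟨z, hz, hρ⟩, hmax⟩ := isGreatest_specRad (Dalpha α G)
  constructor
  · obtain ⟨μ, hμ, hle⟩ := Matrix.exists_mem_spectrum_le_norm_of_mul_le_mulVec hM
      (fun i => (hx i).le) hx0 (c := ⨅ i, q i) fun i => (hMx i).symm ▸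
        mul_le_mul_of_nonneg_right (ciInf_le (Set.finite_range q).bddBelow i) (hx i).le
    exact hle.trans (hmax ⟨μ, hμ, rfl⟩)
  · rw [mualpha, hρ]
    exact Matrix.norm_le_of_mem_spectrum_of_mulVec_le hM hx (fun i => (hMx i).symm ▸
      mul_le_mul_of_nonneg_right (le_ciSup (Set.finite_range q).bddAbove i) (hx i).le) hz

theorem stmt3 {n : ℕ} (hn : 2 ≤ n) (G : Digraph (Fin n)) (hG : Loopless G) (hsc : SConn G)
    (α : ℝ) (h0 : 0 ≤ α) (h1 : α < 1) :
    (⨅ i : Fin n, (α * transm G i +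
        (1 - α) * (∑ t : Fin n, (ddist G i t : ℝ) * transm G t) / transm G i)) ≤ mualpha α G ∧
    mualpha α G ≤ (⨆ i : Fin n, (α * transm G i +
        (1 - α) * (∑ t : Fin n, (ddist G i t : ℝ) * transm G t) / transm G i)) :=
  stmt3_general hn G hsc α h0 h1
end

section
/- For α = 0 and integers 1 ≤ k ≤ n-2, μ_0(K(n,k,1)) = μ_0(K(n,k,n-k-1)) = (n - 2 + sqrt(n² + 4n - 4k - 4))/2. -/
open Matrix BigOperators

/-!
The distance matrix of `K(n,k,m)` is `J - I + E`, where `E` marks the pairs (last block, middle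
block), the only ones at distance `2` (through any vertex of the first clique). For `m = 1` and
for `m = n - k - 1` it has a positive eigenvector that is constant on `{0, …, k + m - 1}` and on
the remaining vertices; its eigenvalue `μ` satisfies `μ² = (n - 2) μ + (2n - k - 2)`. A positive
eigenvector of a nonnegative matrix belongs to the spectral radius, so `μ` is the larger root.
-/

open Finset

section Spectrum

variable {ι : Type*} [Fintype ι] [DecidableEq ι]

theorem Matrix.mem_spectrum_iff_exists_mulVec_eq_smul {K : Type*} [Field K] (A : Matrix ι ι K)
    (μ : K) : μ ∈ spectrum K A ↔ ∃ x ≠ 0, A *ᵥ x = μ • x := by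
  rw [← Matrix.spectrum_toLin', ← Module.End.hasEigenvalue_iff_mem_spectrum,
    Module.End.hasEigenvalue_iff, Submodule.ne_bot_iff]
  simp [and_comm]

variable {M : Matrix ι ι ℝ} {v : ι → ℝ} {μ : ℝ}

theorem norm_le_of_mem_spectrum_of_pos_eigenvector (hM : ∀ i j, 0 ≤ M i j) (hv : ∀ i, 0 < v i)
    (hMv : M *ᵥ v = μ • v) {z : ℂ} (hz : z ∈ spectrum ℂ (M.map (fun x => (x : ℂ)))) :
    ‖z‖ ≤ μ := by
  obtain ⟨x, hx0, hx⟩ := (Matrix.mem_spectrum_iff_exists_mulVec_eq_smul _ z).1 hz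
  obtain ⟨j, hj⟩ := Function.ne_iff.1 hx0
  have : Nonempty ι := ⟨j⟩
  -- Collatz–Wielandt: compare `x` with `v` at an index maximising `‖x i‖ / v i`.
  obtain ⟨i, -, hi⟩ := exists_max_image univ (fun j => ‖x j‖ / v j) univ_nonempty
  have hxi : 0 < ‖x i‖ := by
    have := hi j (mem_univ j)
    have := div_pos (norm_pos_iff.2 hj) (hv j)
    exact (div_pos_iff_of_pos_right (hv i)).1 (by linarith)
  have hxj (j : ι) : ‖x j‖ ≤ ‖x i‖ / v i * v j := by
    rw [← div_le_iff₀ (hv j)]; exact hi j (mem_univ j)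
  have hrow : ∑ j, M i j * v j = μ * v i := congrFun hMv i
  refine le_of_mul_le_mul_right ?_ hxi
  calc ‖z‖ * ‖x i‖ = ‖∑ j, (M i j : ℂ) * x j‖ := by
        rw [← norm_mul, ← smul_eq_mul, ← Pi.smul_apply, ← hx]; rfl
    _ ≤ ∑ j, M i j * ‖x j‖ := by
        refine (norm_sum_le _ _).trans_eq (sum_congr rfl fun j _ => ?_)
        rw [norm_mul, Complex.norm_real, Real.norm_of_nonneg (hM i j)]
    _ ≤ ∑ j, M i j * (‖x i‖ / v i * v j) := by gcongr with j; exacts [hM i j, hxj j]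
    _ = μ * ‖x i‖ := by
        simp_rw [mul_left_comm (M i _), ← mul_sum, hrow]; field_simp [(hv i).ne']

theorem ofReal_mem_spectrum_of_pos_eigenvector [Nonempty ι] (hv : ∀ i, 0 < v i)
    (hMv : M *ᵥ v = μ • v) : (μ : ℂ) ∈ spectrum ℂ (M.map (fun x => (x : ℂ))) := by
  refine (Matrix.mem_spectrum_iff_exists_mulVec_eq_smul _ _).2
    ⟨fun i => v i, fun h => ?_, ?_⟩
  · obtain ⟨i⟩ := ‹Nonempty ι›
    exact (hv i).ne' (by simpa using congrFun h i)
  · ext i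
    have := congrFun hMv i
    simp only [Matrix.mulVec, dotProduct, Pi.smul_apply, smul_eq_mul, Matrix.map_apply] at this ⊢
    exact_mod_cast this

end Spectrum

theorem specRad_eq_of_pos_eigenvector {n : ℕ} [NeZero n] {M : Matrix (Fin n) (Fin n) ℝ}
    (hM : ∀ i j, 0 ≤ M i j) {v : Fin n → ℝ} (hv : ∀ i, 0 < v i) {μ : ℝ}
    (hMv : M *ᵥ v = μ • v) : specRad M = μ := by
  have hμ := ofReal_mem_spectrum_of_pos_eigenvector hv hMv
  have hbound : ∀ z ∈ spectrum ℂ (M.map fun x => (x : ℂ)), ‖z‖ ≤ μ :=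
    fun _ => norm_le_of_mem_spectrum_of_pos_eigenvector hM hv hMv
  have hμ_norm : ‖(μ : ℂ)‖ = μ := by
    rw [Complex.norm_real, Real.norm_of_nonneg ((norm_nonneg _).trans (hbound _ hμ))]
  refine le_antisymm (csSup_le ⟨μ, _, hμ, hμ_norm.symm⟩ ?_)
    (le_csSup ⟨μ, ?_⟩ ⟨_, hμ, hμ_norm.symm⟩)
  all_goals rintro _ ⟨z, hz, rfl⟩; exact hbound z hz

section Distance

variable {n : ℕ} {G : Digraph (Fin n)} {i j : Fin n}

theorem dWalk_zero_iff : DWalk G i j 0 ↔ i = j :=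
  ⟨fun ⟨f, h0, h1, _⟩ => h0 ▸ h1, fun h => ⟨fun _ => i, rfl, h, by simp⟩⟩

theorem dWalk_one_iff : DWalk G i j 1 ↔ G.Adj i j := by
  refine ⟨fun ⟨f, h0, h1, hf⟩ => h0 ▸ h1 ▸ hf 0 one_pos, fun h => ?_⟩
  exact ⟨fun l => if l = 0 then i else j, rfl, rfl, by simpa using h⟩

theorem dWalk_two_of_adj {z : Fin n} (hiz : G.Adj i z) (hzj : G.Adj z j) : DWalk G i j 2 := by
  refine ⟨fun l => if l = 0 then i else if l = 1 then z else j, rfl, rfl, fun l hl => ?_⟩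
  interval_cases l <;> simpa

theorem ddist_eq_of_dWalk {d : ℕ} (hd : DWalk G i j d) (hlt : ∀ e < d, ¬DWalk G i j e) :
    ddist G i j = d :=
  le_antisymm (Nat.sInf_le hd) (le_csInf ⟨d, hd⟩ fun _ he => not_lt.1 fun h => hlt _ h he)

theorem ddist_self : ddist G i i = 0 :=
  ddist_eq_of_dWalk (dWalk_zero_iff.2 rfl) (by simp)

theorem ddist_eq_one (hij : i ≠ j) (h : G.Adj i j) : ddist G i j = 1 :=
  ddist_eq_of_dWalk (dWalk_one_iff.2 h) fun e he => by
    obtain rfl : e = 0 := by omega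
    exact hij ∘ dWalk_zero_iff.1

theorem ddist_eq_two {z : Fin n} (hij : i ≠ j) (h : ¬G.Adj i j) (hiz : G.Adj i z)
    (hzj : G.Adj z j) : ddist G i j = 2 :=
  ddist_eq_of_dWalk (dWalk_two_of_adj hiz hzj) fun e he => by
    interval_cases e
    exacts [hij ∘ dWalk_zero_iff.1, h ∘ dWalk_one_iff.1]

end Distance

theorem ddist_KD {n k m : ℕ} (hk : 0 < k) (i j : Fin n) :
    ddist (KD n k m) i j =
      if i = j then 0 else if k + m ≤ i ∧ k ≤ j ∧ j < k + m then 2 else 1 := by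
  split_ifs with hij hblock
  · exact hij ▸ ddist_self
  · -- vertex `0` of the first clique is an out-neighbour of `i` and an in-neighbour of `j`
    have hn : 0 < n := by omega
    refine ddist_eq_two hij (fun h => h.2 hblock) (z := ⟨0, hn⟩) ⟨?_, ?_⟩ ⟨?_, ?_⟩ <;>
      simp [Fin.ext_iff] <;> omega
  · exact ddist_eq_one hij ⟨hij, hblock⟩

theorem Dalpha_zero_KD_mulVec {n k m : ℕ} (hk : 0 < k) (hkm : k + m ≤ n) (v : ℕ → ℝ)
    (i : Fin n) :
    (Dalpha 0 (KD n k m) *ᵥ fun j => v j) i =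
      ∑ j ∈ range n, v j - v i + if k + m ≤ i then ∑ j ∈ Ico k (k + m), v j else 0 := by
  have hentry (j : Fin n) : Dalpha 0 (KD n k m) i j =
      1 - (if i = j then 1 else 0) + if k + m ≤ i ∧ k ≤ j ∧ j < k + m then 1 else 0 := by
    simp only [Dalpha, zero_smul, zero_add, sub_zero, one_smul, Matrix.of_apply, ddist_KD hk]
    split_ifs with h1 h2 <;> first | (subst h1; omega) | norm_num
  simp only [Matrix.mulVec, dotProduct, hentry, add_mul, sub_mul, one_mul, ite_mul, zero_mul,
    sum_add_distrib, sum_sub_distrib, Fintype.sum_ite_eq, Fin.sum_univ_eq_sum_range v]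
  by_cases hi : k + m ≤ (i : ℕ)
  · simp only [hi, true_and, if_true, ← mem_Ico,
      Fin.sum_univ_eq_sum_range (fun j => if j ∈ Ico k (k + m) then v j else 0), sum_ite_mem,
      range_eq_Ico, inter_eq_right.2 (Ico_subset_Ico (Nat.zero_le k) hkm)]
  · simp [hi]

theorem sum_range_ite_lt {n c : ℕ} (hc : c ≤ n) (a b : ℝ) :
    ∑ j ∈ range n, (if j < c then a else b) = c * a + (n - c) * b := by
  obtain ⟨d, rfl⟩ := Nat.exists_eq_add_of_le hc
  simp [sum_range_add, sum_ite_of_true, mul_comm]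

theorem sq_larger_quadratic_root {b c : ℝ} (hc : 0 ≤ c) :
    ((b + √(b ^ 2 + 4 * c)) / 2) ^ 2 = b * ((b + √(b ^ 2 + 4 * c)) / 2) + c := by
  linear_combination (Real.sq_sqrt (by positivity : 0 ≤ b ^ 2 + 4 * c)) / 4

theorem lt_larger_quadratic_root {b c : ℝ} (hc : 0 < c) : b < (b + √(b ^ 2 + 4 * c)) / 2 := by
  have : b < √(b ^ 2 + 4 * c) := (le_abs_self b).trans_lt <|
    Real.sqrt_sq_eq_abs b ▸ Real.sqrt_lt_sqrt (sq_nonneg b) (by linarith)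
  linarith

theorem mualpha_zero_KD_one {n k : ℕ} (hk : 0 < k) (hkn : k + 2 ≤ n) {μ : ℝ}
    (hμ : μ ^ 2 = (n - 2) * μ + (2 * n - k - 2)) (hμn : (n : ℝ) - 2 < μ) :
    mualpha 0 (KD n k 1) = μ := by
  have : NeZero n := ⟨by omega⟩
  have hkn' : (k : ℝ) + 2 ≤ n := by exact_mod_cast hkn
  set v : ℕ → ℝ := fun j => if j < k + 1 then (n : ℝ) - k - 1 else μ - k with hv
  refine specRad_eq_of_pos_eigenvector (v := fun j => v j) (fun i j => by simp [Dalpha])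
    (fun j => by simp only [hv]; split_ifs <;> linarith) (funext fun i => ?_)
  rw [Dalpha_zero_KD_mulVec hk (by omega), sum_range_ite_lt (by omega), Nat.Ico_succ_singleton,
    sum_singleton]
  by_cases hi : k + 1 ≤ (i : ℕ)
  · simp [hv, hi, show ¬(i : ℕ) ≤ k by omega]
    linear_combination -hμ
  · simp [hv, hi, show (i : ℕ) ≤ k by omega]
    ring

theorem mualpha_zero_KD_of_add_one_eq {n k m : ℕ} (hk : 0 < k) (hn : k + m + 1 = n) {μ : ℝ}
    (hμ : μ ^ 2 = (n - 2) * μ + (2 * n - k - 2)) (hμn : (n : ℝ) - 2 < μ) :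
    mualpha 0 (KD n k m) = μ := by
  subst hn
  push_cast at hμ hμn
  set v : ℕ → ℝ := fun j => if j < k + m then 1 else μ - (k + m - 1) with hv
  have hblock : ∑ j ∈ Ico k (k + m), v j = m := by
    rw [sum_congr rfl fun j hj => if_pos (mem_Ico.1 hj).2]
    simp
  refine specRad_eq_of_pos_eigenvector (v := fun j => v j) (fun i j => by simp [Dalpha])
    (fun j => by simp only [hv]; split_ifs <;> linarith) (funext fun i => ?_)
  rw [Dalpha_zero_KD_mulVec hk (by omega), sum_range_ite_lt (by omega), hblock]
  by_cases hi : k + m ≤ (i : ℕ)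
  · simp [hv, hi, show ¬(i : ℕ) < k + m by omega]
    linear_combination -hμ
  · simp [hv, hi, show (i : ℕ) < k + m by omega]
    ring

theorem stmt13 {n k : ℕ} (hk : 1 ≤ k) (hkn : k + 2 ≤ n) :
    mualpha 0 (KD n k 1) =
      ((n : ℝ) - 2 + Real.sqrt ((n : ℝ) ^ 2 + 4 * n - 4 * k - 4)) / 2 ∧
    mualpha 0 (KD n k (n - k - 1)) =
      ((n : ℝ) - 2 + Real.sqrt ((n : ℝ) ^ 2 + 4 * n - 4 * k - 4)) / 2 := by
  have hc : (0 : ℝ) < 2 * n - k - 2 := by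
    have : (k : ℝ) + 2 ≤ n := by exact_mod_cast hkn
    linarith
  have hroot : ((n : ℝ) - 2 + √((n : ℝ) ^ 2 + 4 * n - 4 * k - 4)) / 2 =
      ((n - 2) + √((n - 2) ^ 2 + 4 * (2 * n - k - 2))) / 2 := by ring_nf
  rw [hroot]
  have hquad := sq_larger_quadratic_root (b := (n : ℝ) - 2) hc.le
  have hgt := lt_larger_quadratic_root (b := (n : ℝ) - 2) hc
  exact ⟨mualpha_zero_KD_one hk hkn hquad hgt,
    mualpha_zero_KD_of_add_one_eq hk (by omega) hquad hgt⟩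
end
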